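/- Let H₁, H₂ ∈ (0,1) with 2H₁ + H₂ < 2 and let K₀ : ℝ² → ℝ be a smooth function supported in the parabolic ball B_𝔰(0,1). Then Σ_{k∈ℤ} 2^{−2k} ∫_{[−1,1]²} |K̂₀(2^{−2k}ξ, 2^{−k}η)| · |ξ|^{1−2H₁} |η|^{1−2H₂} dξ dη < ∞. -/

import Mathlib

noncomputable section

open MeasureTheory

/-- The parabolic norm on `ℝ²`: `‖z‖_𝔰 = (|z₁| + |z₂|²)^(1/2)`. -/
def pnorm (z : ℝ × ℝ) : ℝ := (|z.1| + |z.2| ^ 2) ^ ((1:ℝ)/2)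

/-- The closed parabolic ball centered at `x` with radius `r`. -/
def pball (x : ℝ × ℝ) (r : ℝ) : Set (ℝ × ℝ) := {y | pnorm (y - x) ≤ r}

/-- The kernel `K = Σ_{n ≥ 0} K_n` with `K_n(t,x) = 2^n K₀(2^{2n} t, 2^n x)`. -/
def Kfun (K₀ : ℝ × ℝ → ℝ) : ℝ × ℝ → ℝ := fun p =>
  ∑' n : ℕ, (2:ℝ) ^ n * K₀ ((2:ℝ) ^ (2*n) * p.1, (2:ℝ) ^ n * p.2)

/-- The Fourier transform `f̂(ξ,η) = ∫ e^{-i(tξ + xη)} f(t,x) dt dx` of a function on `ℝ²`. -/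
def FT2 (f : ℝ × ℝ → ℝ) (ξ η : ℝ) : ℂ :=
  ∫ p : ℝ × ℝ, Complex.exp (-(Complex.I * ((p.1 : ℂ) * (ξ : ℂ) + (p.2 : ℂ) * (η : ℂ)))) * (f p : ℂ)

/-- The rectangle `D_n = [-2^{2n}, 2^{2n}] × [-2^n, 2^n]`. -/
def Dn (n : ℕ) : Set (ℝ × ℝ) :=
  Set.Icc (-(2:ℝ) ^ (2*n)) ((2:ℝ) ^ (2*n)) ×ˢ Set.Icc (-(2:ℝ) ^ n) ((2:ℝ) ^ n)

/-- The renormalization constant `C^n = ∫_{D_n} K̂(ξ,η) |ξ|^{1-2H₁} |η|^{1-2H₂} dξ dη`. -/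
def Cn (K₀ : ℝ × ℝ → ℝ) (H₁ H₂ : ℝ) (n : ℕ) : ℂ :=
  ∫ p in Dn n, FT2 (Kfun K₀) p.1 p.2 *
    ((|p.1| ^ (1 - 2*H₁) : ℝ) : ℂ) * ((|p.2| ^ (1 - 2*H₂) : ℝ) : ℂ)

/-- The `k`-th term of the limiting series:
`2^{-2k} ∫_{[-1,1]²} K̂₀(2^{-2k} ξ, 2^{-k} η) |ξ|^{1-2H₁} |η|^{1-2H₂} dξ dη`. -/
def Sterm (K₀ : ℝ × ℝ → ℝ) (H₁ H₂ : ℝ) (k : ℤ) : ℂ :=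
  (((2:ℝ) ^ (-(2*k)) : ℝ) : ℂ) *
    ∫ p in (Set.Icc (-1:ℝ) 1 ×ˢ Set.Icc (-1:ℝ) 1),
      FT2 K₀ ((2:ℝ) ^ (-(2*k)) * p.1) ((2:ℝ) ^ (-k) * p.2) *
        ((|p.1| ^ (1 - 2*H₁) : ℝ) : ℂ) * ((|p.2| ^ (1 - 2*H₂) : ℝ) : ℂ)

lemma abs_rpow_integrableOn {r : ℝ} (hr : -1 < r) :
    IntegrableOn (fun x : ℝ => |x| ^ r) (Set.Icc (-1 : ℝ) 1) := by
  have h01 : IntegrableOn (fun x : ℝ => |x| ^ r) (Set.Ioo (0:ℝ) 1) := by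
    refine ((intervalIntegral.integrableOn_Ioo_rpow_iff one_pos).2 hr).congr_fun (fun x hx => ?_) measurableSet_Ioo
    rw [abs_of_pos hx.1]

  have h1 : IntervalIntegrable (fun x : ℝ => |x| ^ r) volume 0 1 :=
    (intervalIntegrable_iff_integrableOn_Ioo_of_le zero_le_one).2 h01
  have h2 : IntervalIntegrable (fun x : ℝ => |x| ^ r) volume 0 (-1) := by
    have := (IntervalIntegrable.iff_comp_neg (f := fun x : ℝ => |x| ^ r)).1 h1
    simpa using this
  exact (intervalIntegrable_iff_integrableOn_Icc_of_le (by norm_num)).1 (h2.symm.trans h1)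

def Lb : (ℝ × ℝ) →L[ℝ] (ℝ × ℝ) →L[ℝ] ℝ :=
  LinearMap.mkContinuous₂
    (LinearMap.mk₂ ℝ (fun v w => (v.1 * w.1 + v.2 * w.2) / (2 * Real.pi))
      (fun m₁ m₂ n => by dsimp; ring)
      (fun c m n => by dsimp; ring)
      (fun m n₁ n₂ => by dsimp; ring)
      (fun c m n => by dsimp; ring))
    1
    (fun v w => by
      have h1 : |v.1| ≤ ‖v‖ := (Real.norm_eq_abs v.1) ▸ norm_fst_le v
      have h2 : |v.2| ≤ ‖v‖ := (Real.norm_eq_abs v.2) ▸ norm_snd_le v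
      have k1 : |w.1| ≤ ‖w‖ := (Real.norm_eq_abs w.1) ▸ norm_fst_le w
      have k2 : |w.2| ≤ ‖w‖ := (Real.norm_eq_abs w.2) ▸ norm_snd_le w
      have hpi := Real.pi_gt_three
      have habs : |v.1 * w.1 + v.2 * w.2| ≤ |v.1| * |w.1| + |v.2| * |w.2| :=
        (abs_add_le _ _).trans (by rw [abs_mul, abs_mul])
      have p1 : |v.1| * |w.1| ≤ ‖v‖ * ‖w‖ := mul_le_mul h1 k1 (abs_nonneg _) (norm_nonneg _)
      have p2 : |v.2| * |w.2| ≤ ‖v‖ * ‖w‖ := mul_le_mul h2 k2 (abs_nonneg _) (norm_nonneg _)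
      dsimp
      rw [abs_div, abs_of_pos (by positivity : (0:ℝ) < 2 * Real.pi),
        div_le_iff₀ (by positivity)]
      nlinarith [mul_nonneg (norm_nonneg v) (norm_nonneg w)])

lemma Lb_apply (v w : ℝ × ℝ) : Lb v w = (v.1 * w.1 + v.2 * w.2) / (2 * Real.pi) := rfl

lemma Lb_apply₂ (v w : ℝ × ℝ) :
    (ContinuousLinearMap.toLinearMap₁₂ Lb) v w = (v.1 * w.1 + v.2 * w.2) / (2 * Real.pi) := rfl

lemma sq_rpow_half (x t : ℝ) : ((x ^ 2 : ℝ)) ^ (t / 2) = |x| ^ t := by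
  rw [← sq_abs, ← Real.rpow_natCast |x| 2, ← Real.rpow_mul (abs_nonneg x)]
  congr 1
  ring

lemma FT2_eq (f : ℝ × ℝ → ℝ) (ξ η : ℝ) :
    FT2 f ξ η = VectorFourier.fourierIntegral Real.fourierChar volume
      (ContinuousLinearMap.toLinearMap₁₂ Lb) (fun p => (f p : ℂ)) (ξ, η) := by
  unfold FT2 VectorFourier.fourierIntegral
  refine integral_congr_ae (Filter.Eventually.of_forall fun p => ?_)
  dsimp only
  rw [Circle.smul_def, Real.fourierChar_apply, Lb_apply₂]
  congr 1
  have hπ : (2 : ℝ) * Real.pi ≠ 0 := by positivity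
  have : 2 * Real.pi * -((p.1 * ξ + p.2 * η) / (2 * Real.pi)) = -(p.1 * ξ + p.2 * η) := by
    field_simp
  rw [this]
  push_cast
  ring

lemma pball_subset : pball 0 1 ⊆ Metric.closedBall (0 : ℝ × ℝ) 1 := by
  intro y hy
  have hy' : (|y.1| + |y.2| ^ 2) ^ ((1:ℝ)/2) ≤ 1 := by
    simpa [pball, pnorm] using hy
  have hsum : |y.1| + |y.2| ^ 2 ≤ 1 := by
    by_contra hlt
    push_neg at hlt
    have h2 := Real.rpow_lt_rpow (by norm_num : (0:ℝ) ≤ 1) hlt (by norm_num : (0:ℝ) < 1/2)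
    rw [Real.one_rpow] at h2
    exact absurd hy' (not_le.2 h2)
  have h1 : |y.1| ≤ 1 := by nlinarith [sq_nonneg y.2, sq_abs y.2]
  have h2 : |y.2| ≤ 1 := by nlinarith [abs_nonneg y.1, abs_nonneg y.2]
  rw [Metric.mem_closedBall, dist_zero_right, Prod.norm_def]
  simp only [Real.norm_eq_abs]
  exact max_le h1 h2

lemma master (K₀ : ℝ × ℝ → ℝ) (hK₀ : ContDiff ℝ (⊤ : ℕ∞) K₀)
    (hKsupp : Function.support K₀ ⊆ pball 0 1) :
    ∃ M₀ M₁ M₂ : ℝ, 0 ≤ M₀ ∧ 0 ≤ M₁ ∧ 0 ≤ M₂ ∧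
      ∀ ξ η : ℝ, ‖FT2 K₀ ξ η‖ ≤ M₀ ∧ ξ ^ 2 * ‖FT2 K₀ ξ η‖ ≤ M₁ ∧
        η ^ 2 * ‖FT2 K₀ ξ η‖ ≤ M₂ := by
  set fc : ℝ × ℝ → ℂ := fun p => (K₀ p : ℂ) with hfc_def
  have hfc_smooth : ContDiff ℝ ((⊤:ℕ∞) : WithTop ℕ∞) fc :=
    Complex.ofRealCLM.contDiff.comp (hK₀.of_le (by simp))
  have hfc_supp : HasCompactSupport fc := by
    apply HasCompactSupport.intro (isCompact_closedBall (0 : ℝ × ℝ) 1)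
    intro x hx
    have hK : K₀ x = 0 := by
      by_contra h
      exact hx (pball_subset (hKsupp (by simpa [Function.mem_support] using h)))
    simp [hfc_def, hK]
  have h'f : ∀ (k n : ℕ), (k : ℕ∞) ≤ (⊤:ℕ∞) → (n : ℕ∞) ≤ (⊤:ℕ∞) →
      Integrable (fun v : ℝ × ℝ => ‖v‖ ^ k * ‖iteratedFDeriv ℝ n fc v‖) volume := by
    intro k n _ _
    have hcont : Continuous fun v : ℝ × ℝ => ‖v‖ ^ k * ‖iteratedFDeriv ℝ n fc v‖ :=
      (continuous_norm.pow k).mul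
        (hfc_smooth.continuous_iteratedFDeriv (by exact_mod_cast le_top)).norm
    have hsupp : HasCompactSupport fun v : ℝ × ℝ => ‖v‖ ^ k * ‖iteratedFDeriv ℝ n fc v‖ :=
      ((hfc_supp.iteratedFDeriv n).norm).mul_left
    exact hcont.integrable_of_hasCompactSupport hsupp
  have key : ∀ n : ℕ, ∃ C : ℝ, ∀ v w : ℝ × ℝ,
      |Lb v w| ^ n * ‖FT2 K₀ w.1 w.2‖ ≤ ‖v‖ ^ n * C := by
    intro n
    refine ⟨(2 * Real.pi * ‖Lb‖) ^ (0:ℕ) * ((2 * (0:ℕ) + 2 : ℝ)) ^ n *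
        ∑ p ∈ Finset.range (0 + 1) ×ˢ Finset.range (n + 1),
          ∫ v : ℝ × ℝ, ‖v‖ ^ p.1 * ‖iteratedFDeriv ℝ p.2 fc v‖, fun v w => ?_⟩
    have h := VectorFourier.pow_mul_norm_iteratedFDeriv_fourierIntegral_le (E := ℂ)
      Lb hfc_smooth h'f (K := (⊤:ℕ∞)) (N := (⊤:ℕ∞)) (k := 0) (n := n) le_top le_top v w
    rw [norm_iteratedFDeriv_zero] at h
    have hFT : FT2 K₀ w.1 w.2 = VectorFourier.fourierIntegral Real.fourierChar volume
        (ContinuousLinearMap.toLinearMap₁₂ Lb) fc w := by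
      rw [FT2_eq]
    rw [hFT]
    calc |Lb v w| ^ n * ‖VectorFourier.fourierIntegral Real.fourierChar volume
          (ContinuousLinearMap.toLinearMap₁₂ Lb) fc w‖ ≤ _ := h
    _ = _ := by ring
  obtain ⟨C₀, hC₀⟩ := key 0
  obtain ⟨C₂, hC₂⟩ := key 2
  refine ⟨max C₀ 0, max ((2 * Real.pi) ^ 2 * C₂) 0, max ((2 * Real.pi) ^ 2 * C₂) 0,
    le_max_right _ _, le_max_right _ _, le_max_right _ _, fun ξ η => ?_⟩
  have hpi : (0:ℝ) < 2 * Real.pi := by positivity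
  refine ⟨?_, ?_, ?_⟩
  · have h := hC₀ (0, 0) (ξ, η)
    simp only [pow_zero, one_mul] at h
    exact h.trans (le_max_left _ _)
  · have h := hC₂ (1, 0) (ξ, η)
    have hL : Lb ((1:ℝ), (0:ℝ)) (ξ, η) = ξ / (2 * Real.pi) := by
      rw [Lb_apply]; norm_num
    have hv : ‖((1:ℝ), (0:ℝ))‖ = 1 := by
      rw [Prod.norm_def]; simp
    rw [hL, hv, one_pow, one_mul, sq_abs, div_pow] at h
    have h2 := mul_le_mul_of_nonneg_left h (by positivity : (0:ℝ) ≤ (2 * Real.pi) ^ 2)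
    refine le_trans (le_of_eq ?_) (h2.trans (le_max_left _ _))
    field_simp
  · have h := hC₂ (0, 1) (ξ, η)
    have hL : Lb ((0:ℝ), (1:ℝ)) (ξ, η) = η / (2 * Real.pi) := by
      rw [Lb_apply]; norm_num
    have hv : ‖((0:ℝ), (1:ℝ))‖ = 1 := by
      rw [Prod.norm_def]; simp
    rw [hL, hv, one_pow, one_mul, sq_abs, div_pow] at h
    have h2 := mul_le_mul_of_nonneg_left h (by positivity : (0:ℝ) ≤ (2 * Real.pi) ^ 2)
    refine le_trans (le_of_eq ?_) (h2.trans (le_max_left _ _))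
    field_simp

lemma rpow_bound {M₀ M₁ M₂ a b : ℝ} (h₀ : 0 ≤ M₀) (h₁ : 0 ≤ M₁) (h₂ : 0 ≤ M₂)
    (ha : 0 ≤ a) (hb : 0 ≤ b) (hab : a + b ≤ 2)
    {m u v : ℝ} (hm : 0 ≤ m) (hu : u ≠ 0) (hv : v ≠ 0)
    (b0 : m ≤ M₀) (b1 : u ^ 2 * m ≤ M₁) (b2 : v ^ 2 * m ≤ M₂) :
    m ≤ (M₁ ^ (a/2) * M₂ ^ (b/2) * M₀ ^ (1 - a/2 - b/2)) * (|u| ^ (-a) * |v| ^ (-b)) := by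
  set c : ℝ := 1 - a/2 - b/2 with hc_def
  have hc : 0 ≤ c := by simp only [hc_def]; linarith
  set D : ℝ := M₁ ^ (a/2) * M₂ ^ (b/2) * M₀ ^ c with hD_def
  have hD : 0 ≤ D := by positivity
  have hu' : (0:ℝ) < |u| := abs_pos.2 hu
  have hv' : (0:ℝ) < |v| := abs_pos.2 hv
  have claim : m * (|u| ^ a * |v| ^ b) ≤ D := by
    rcases eq_or_lt_of_le hm with h0 | h0
    · rw [← h0]; simpa using hD
    · have hm3 : m ^ (a/2) * m ^ (b/2) * m ^ c = m := by
        rw [← Real.rpow_add h0, ← Real.rpow_add h0]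
        have : a/2 + b/2 + c = 1 := by simp only [hc_def]; ring
        rw [this, Real.rpow_one]
      have key_eq : m * (|u| ^ a * |v| ^ b)
          = (u ^ 2 * m) ^ (a/2) * ((v ^ 2 * m) ^ (b/2) * m ^ c) := by
        rw [Real.mul_rpow (sq_nonneg u) hm, Real.mul_rpow (sq_nonneg v) hm,
          sq_rpow_half, sq_rpow_half]
        calc m * (|u| ^ a * |v| ^ b)
            = |u| ^ a * |v| ^ b * (m ^ (a/2) * m ^ (b/2) * m ^ c) := by rw [hm3]; ring
          _ = |u| ^ a * m ^ (a/2) * (|v| ^ b * m ^ (b/2) * m ^ c) := by ring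
      rw [key_eq]
      have e1 : (u ^ 2 * m) ^ (a/2) ≤ M₁ ^ (a/2) :=
        Real.rpow_le_rpow (by positivity) b1 (by linarith)
      have e2 : (v ^ 2 * m) ^ (b/2) ≤ M₂ ^ (b/2) :=
        Real.rpow_le_rpow (by positivity) b2 (by linarith)
      have e3 : m ^ c ≤ M₀ ^ c := Real.rpow_le_rpow hm b0 hc
      calc (u ^ 2 * m) ^ (a/2) * ((v ^ 2 * m) ^ (b/2) * m ^ c)
          ≤ M₁ ^ (a/2) * (M₂ ^ (b/2) * M₀ ^ c) := by
            apply mul_le_mul e1 (mul_le_mul e2 e3 (by positivity) (by positivity))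
              (by positivity) (by positivity)
        _ = D := by rw [hD_def]; ring
  have hone : |u| ^ a * |v| ^ b * (|u| ^ (-a) * |v| ^ (-b)) = 1 := by
    have e1 : |u| ^ a * |u| ^ (-a) = 1 := by
      rw [← Real.rpow_add hu']; simp
    have e2 : |v| ^ b * |v| ^ (-b) = 1 := by
      rw [← Real.rpow_add hv']; simp
    calc |u| ^ a * |v| ^ b * (|u| ^ (-a) * |v| ^ (-b))
        = (|u| ^ a * |u| ^ (-a)) * (|v| ^ b * |v| ^ (-b)) := by ring
      _ = 1 := by rw [e1, e2, one_mul]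
  have hsplit : m = (m * (|u| ^ a * |v| ^ b)) * (|u| ^ (-a) * |v| ^ (-b)) := by
    rw [mul_assoc, hone, mul_one]
  rw [hsplit]
  exact mul_le_mul_of_nonneg_right claim (by positivity)

lemma ae_fst_ne_zero : ∀ᵐ p : ℝ × ℝ, p.1 ≠ 0 := by
  rw [ae_iff]
  have hset : {p : ℝ × ℝ | ¬ p.1 ≠ 0} = ({0} : Set ℝ) ×ˢ (Set.univ : Set ℝ) := by
    ext p
    simp only [Set.mem_setOf_eq, not_not, Set.mem_prod, Set.mem_singleton_iff, Set.mem_univ,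
      and_true]
  rw [hset, Measure.volume_eq_prod, Measure.prod_prod]
  simp

lemma ae_snd_ne_zero : ∀ᵐ p : ℝ × ℝ, p.2 ≠ 0 := by
  rw [ae_iff]
  have hset : {p : ℝ × ℝ | ¬ p.2 ≠ 0} = (Set.univ : Set ℝ) ×ˢ ({0} : Set ℝ) := by
    ext p
    simp only [Set.mem_setOf_eq, not_not, Set.mem_prod, Set.mem_singleton_iff, Set.mem_univ,
      true_and]
  rw [hset, Measure.volume_eq_prod, Measure.prod_prod]
  simp

lemma int_le (r s c : ℝ) (hr : -1 < r) (hs : -1 < s)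
    (g : ℝ × ℝ → ℝ) (hg0 : ∀ p, 0 ≤ g p)
    (hgle : ∀ p : ℝ × ℝ, p.1 ≠ 0 → p.2 ≠ 0 → g p ≤ c * (|p.1| ^ r * |p.2| ^ s)) :
    (∫ p in (Set.Icc (-1:ℝ) 1 ×ˢ Set.Icc (-1:ℝ) 1), g p) ≤
      c * ((∫ x in Set.Icc (-1:ℝ) 1, |x| ^ r) * (∫ x in Set.Icc (-1:ℝ) 1, |x| ^ s)) := by
  have hir := abs_rpow_integrableOn hr
  have his := abs_rpow_integrableOn hs
  have hmaj : Integrable (fun p : ℝ × ℝ => c * (|p.1| ^ r * |p.2| ^ s))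
      (volume.restrict (Set.Icc (-1:ℝ) 1 ×ˢ Set.Icc (-1:ℝ) 1)) := by
    rw [Measure.volume_eq_prod, ← Measure.prod_restrict]
    exact (Integrable.mul_prod hir his).const_mul c
  have hae : ∀ᵐ p : ℝ × ℝ ∂(volume.restrict (Set.Icc (-1:ℝ) 1 ×ˢ Set.Icc (-1:ℝ) 1)),
      g p ≤ c * (|p.1| ^ r * |p.2| ^ s) := by
    filter_upwards [ae_fst_ne_zero.filter_mono (ae_mono Measure.restrict_le_self),
      ae_snd_ne_zero.filter_mono (ae_mono Measure.restrict_le_self)] with p hp1 hp2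
    exact hgle p hp1 hp2
  refine (integral_mono_of_nonneg (Filter.Eventually.of_forall hg0) hmaj hae).trans_eq ?_
  rw [Measure.volume_eq_prod, ← Measure.prod_restrict, MeasureTheory.integral_const_mul,
    integral_prod_mul (f := fun x : ℝ => |x| ^ r) (g := fun x : ℝ => |x| ^ s)]


theorem stmt11 (H₁ H₂ : ℝ) (hH₁ : H₁ ∈ Set.Ioo (0:ℝ) 1) (hH₂ : H₂ ∈ Set.Ioo (0:ℝ) 1)
    (hhigh : 2*H₁ + H₂ < 2)
    (K₀ : ℝ × ℝ → ℝ) (hK₀ : ContDiff ℝ (⊤ : ℕ∞) K₀)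
    (hKsupp : Function.support K₀ ⊆ pball 0 1) :
    Summable (fun k : ℤ => (2:ℝ) ^ (-(2*k)) *
      ∫ p in (Set.Icc (-1:ℝ) 1 ×ˢ Set.Icc (-1:ℝ) 1),
        ‖FT2 K₀ ((2:ℝ) ^ (-(2*k)) * p.1) ((2:ℝ) ^ (-k) * p.2)‖ *
          |p.1| ^ (1 - 2*H₁) * |p.2| ^ (1 - 2*H₂)) := by
  obtain ⟨hH₁0, hH₁1⟩ := hH₁
  obtain ⟨hH₂0, hH₂1⟩ := hH₂
  -- exponent choices
  set a : ℝ := (H₂ + (2 - 2*H₁)) / 2 with ha_def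
  have haH : H₂ < a := by rw [ha_def]; linarith
  have ha2 : a < 2 - 2*H₁ := by rw [ha_def]; linarith
  have ha0 : 0 < a := by rw [ha_def]; linarith
  set m : ℝ := min (2 - a) (2 - 2*H₂) with hm_def
  have hm0 : 0 < m := lt_min (by linarith) (by linarith)
  have hm1 : 2 - 2*a < m := lt_min (by linarith) (by linarith)
  set b : ℝ := (max (2 - 2*a) 0 + m) / 2 with hb_def
  have hb0 : 0 < b := by
    have h := le_max_right (2 - 2*a) 0
    rw [hb_def]; linarith
  have hbgt : 2 - 2*a < b := by
    have h := le_max_left (2 - 2*a) 0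
    rw [hb_def]; linarith
  have hbm : b < m := by
    have h : max (2 - 2*a) 0 < m := max_lt hm1 hm0
    rw [hb_def]; linarith
  have hbam : b ≤ 2 - a := hbm.le.trans (min_le_left _ _)
  have hbH : b < 2 - 2*H₂ := lt_of_lt_of_le hbm (min_le_right _ _)
  set ε : ℝ := 2*a + b - 2 with hε_def
  have hε0 : 0 < ε := by rw [hε_def]; linarith
  -- master bounds
  obtain ⟨M₀, M₁, M₂, h₀, h₁, h₂, hM⟩ := master K₀ hK₀ hKsupp
  set D : ℝ := M₁ ^ (a/2) * M₂ ^ (b/2) * M₀ ^ (1 - a/2 - b/2) with hD_def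
  have hD : 0 ≤ D := by positivity
  set P : ℝ := 1 - 2*H₁ with hP_def
  set Q : ℝ := 1 - 2*H₂ with hQ_def
  have hP : -1 < P := by rw [hP_def]; linarith
  have hQ : -1 < Q := by rw [hQ_def]; linarith
  have hPa : -1 < P - a := by rw [hP_def]; linarith
  have hQb : -1 < Q - b := by rw [hQ_def]; linarith
  set J : ℝ → ℝ := fun r => ∫ x in Set.Icc (-1:ℝ) 1, |x| ^ r with hJ_def
  set T : ℤ → ℝ := fun k => (2:ℝ) ^ (-(2*k)) *
      ∫ p in (Set.Icc (-1:ℝ) 1 ×ˢ Set.Icc (-1:ℝ) 1),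
        ‖FT2 K₀ ((2:ℝ) ^ (-(2*k)) * p.1) ((2:ℝ) ^ (-k) * p.2)‖ *
          |p.1| ^ P * |p.2| ^ Q with hT_def
  show Summable T
  have hT0 : ∀ k : ℤ, 0 ≤ T k := fun k =>
    mul_nonneg (zpow_nonneg (by norm_num) _) (integral_nonneg fun p => by positivity)
  have bound1 : ∀ k : ℤ, T k ≤ (M₀ * (J P * J Q)) * (2:ℝ) ^ (-(2*k)) := by
    intro k
    have hα : (0:ℝ) < (2:ℝ) ^ (-(2*k)) := zpow_pos (by norm_num) _
    have hβ : (0:ℝ) < (2:ℝ) ^ (-k) := zpow_pos (by norm_num) _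
    have hint := int_le P Q M₀ hP hQ
      (fun p => ‖FT2 K₀ ((2:ℝ) ^ (-(2*k)) * p.1) ((2:ℝ) ^ (-k) * p.2)‖ *
          |p.1| ^ P * |p.2| ^ Q)
      (fun p => by positivity)
      (fun p _ _ => by
        have hm0' := (hM ((2:ℝ) ^ (-(2*k)) * p.1) ((2:ℝ) ^ (-k) * p.2)).1
        calc ‖FT2 K₀ ((2:ℝ) ^ (-(2*k)) * p.1) ((2:ℝ) ^ (-k) * p.2)‖ * |p.1| ^ P * |p.2| ^ Q
            = ‖FT2 K₀ ((2:ℝ) ^ (-(2*k)) * p.1) ((2:ℝ) ^ (-k) * p.2)‖ * (|p.1| ^ P * |p.2| ^ Q) := by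
              ring
          _ ≤ M₀ * (|p.1| ^ P * |p.2| ^ Q) :=
              mul_le_mul_of_nonneg_right hm0' (by positivity))
    calc T k ≤ (2:ℝ) ^ (-(2*k)) * (M₀ * (J P * J Q)) :=
          mul_le_mul_of_nonneg_left hint hα.le
      _ = (M₀ * (J P * J Q)) * (2:ℝ) ^ (-(2*k)) := by ring
  have bound2 : ∀ k : ℤ, T k ≤ (D * (J (P-a) * J (Q-b))) * (2:ℝ) ^ ((k:ℝ) * ε) := by
    intro k
    have hα : (0:ℝ) < (2:ℝ) ^ (-(2*k)) := zpow_pos (by norm_num) _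
    have hβ : (0:ℝ) < (2:ℝ) ^ (-k) := zpow_pos (by norm_num) _
    have hmaster : ∀ p : ℝ × ℝ, p.1 ≠ 0 → p.2 ≠ 0 →
        ‖FT2 K₀ ((2:ℝ) ^ (-(2*k)) * p.1) ((2:ℝ) ^ (-k) * p.2)‖ * |p.1| ^ P * |p.2| ^ Q
          ≤ (D * (((2:ℝ) ^ (-(2*k))) ^ (-a) * ((2:ℝ) ^ (-k)) ^ (-b))) *
            (|p.1| ^ (P - a) * |p.2| ^ (Q - b)) := by
      intro p hp1 hp2
      obtain ⟨m0, m1, m2⟩ := hM ((2:ℝ) ^ (-(2*k)) * p.1) ((2:ℝ) ^ (-k) * p.2)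
      have hu : (2:ℝ) ^ (-(2*k)) * p.1 ≠ 0 := mul_ne_zero hα.ne' hp1
      have hv : (2:ℝ) ^ (-k) * p.2 ≠ 0 := mul_ne_zero hβ.ne' hp2
      have hbig := rpow_bound h₀ h₁ h₂ ha0.le hb0.le (by linarith : a + b ≤ 2)
        (norm_nonneg _) hu hv m0 m1 m2
      rw [← hD_def] at hbig
      have e1 : |(2:ℝ) ^ (-(2*k)) * p.1| ^ (-a)
          = ((2:ℝ) ^ (-(2*k))) ^ (-a) * |p.1| ^ (-a) := by
        rw [abs_mul, Real.mul_rpow (abs_nonneg _) (abs_nonneg _), abs_of_pos hα]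
      have e2 : |(2:ℝ) ^ (-k) * p.2| ^ (-b)
          = ((2:ℝ) ^ (-k)) ^ (-b) * |p.2| ^ (-b) := by
        rw [abs_mul, Real.mul_rpow (abs_nonneg _) (abs_nonneg _), abs_of_pos hβ]
      rw [e1, e2] at hbig
      have f1 : |p.1| ^ (-a) * |p.1| ^ P = |p.1| ^ (P - a) := by
        rw [← Real.rpow_add (abs_pos.2 hp1)]; congr 1; ring
      have f2 : |p.2| ^ (-b) * |p.2| ^ Q = |p.2| ^ (Q - b) := by
        rw [← Real.rpow_add (abs_pos.2 hp2)]; congr 1; ring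
      have step : ‖FT2 K₀ ((2:ℝ) ^ (-(2*k)) * p.1) ((2:ℝ) ^ (-k) * p.2)‖ * |p.1| ^ P * |p.2| ^ Q
          ≤ (D * (((2:ℝ) ^ (-(2*k))) ^ (-a) * |p.1| ^ (-a) *
              (((2:ℝ) ^ (-k)) ^ (-b) * |p.2| ^ (-b)))) * |p.1| ^ P * |p.2| ^ Q := by
        have := mul_le_mul_of_nonneg_right hbig (Real.rpow_nonneg (abs_nonneg p.1) P)
        exact mul_le_mul_of_nonneg_right this (Real.rpow_nonneg (abs_nonneg p.2) Q)
      refine step.trans_eq ?_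
      rw [← f1, ← f2]; ring
    have hint := int_le (P - a) (Q - b)
      (D * (((2:ℝ) ^ (-(2*k))) ^ (-a) * ((2:ℝ) ^ (-k)) ^ (-b))) hPa hQb
      (fun p => ‖FT2 K₀ ((2:ℝ) ^ (-(2*k)) * p.1) ((2:ℝ) ^ (-k) * p.2)‖ *
          |p.1| ^ P * |p.2| ^ Q)
      (fun p => by positivity) hmaster
    have hpow : (2:ℝ) ^ (-(2*k)) * (((2:ℝ) ^ (-(2*k))) ^ (-a) * ((2:ℝ) ^ (-k)) ^ (-b))
        = (2:ℝ) ^ ((k:ℝ) * ε) := by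
      have hα' : ((2:ℝ) ^ (-(2*k)) : ℝ) = (2:ℝ) ^ (((-(2*k)) : ℤ) : ℝ) := by
        rw [Real.rpow_intCast]
      have hβ' : ((2:ℝ) ^ (-k) : ℝ) = (2:ℝ) ^ (((-k) : ℤ) : ℝ) := by
        rw [Real.rpow_intCast]
      rw [hα', hβ', ← Real.rpow_mul (by norm_num : (0:ℝ) ≤ 2),
        ← Real.rpow_mul (by norm_num : (0:ℝ) ≤ 2),
        ← Real.rpow_add (by norm_num : (0:ℝ) < 2),
        ← Real.rpow_add (by norm_num : (0:ℝ) < 2)]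
      congr 1
      push_cast
      rw [hε_def]
      ring
    calc T k ≤ (2:ℝ) ^ (-(2*k)) *
          ((D * (((2:ℝ) ^ (-(2*k))) ^ (-a) * ((2:ℝ) ^ (-k)) ^ (-b))) *
            (J (P-a) * J (Q-b))) := mul_le_mul_of_nonneg_left hint hα.le
      _ = (D * (J (P-a) * J (Q-b))) *
          ((2:ℝ) ^ (-(2*k)) * (((2:ℝ) ^ (-(2*k))) ^ (-a) * ((2:ℝ) ^ (-k)) ^ (-b))) := by ring
      _ = (D * (J (P-a) * J (Q-b))) * (2:ℝ) ^ ((k:ℝ) * ε) := by rw [hpow]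
  apply Summable.of_nat_of_neg
  · refine Summable.of_nonneg_of_le (fun n => hT0 n) (fun n => ?_)
      ((summable_geometric_of_lt_one (by norm_num : (0:ℝ) ≤ 1/4)
        (by norm_num : (1/4 : ℝ) < 1)).mul_left (M₀ * (J P * J Q)))
    refine (bound1 n).trans (le_of_eq ?_)
    congr 1
    rw [show -(2*(n:ℤ)) = (-2) * (n:ℤ) by ring, zpow_mul,
      show ((2:ℝ) ^ (-2:ℤ)) = 1/4 by norm_num, zpow_natCast]
  · refine Summable.of_nonneg_of_le (fun n => hT0 _) (fun n => ?_)
      ((summable_geometric_of_lt_one (Real.rpow_nonneg (by norm_num) _)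
        (Real.rpow_lt_one_of_one_lt_of_neg one_lt_two (by linarith : -ε < 0))).mul_left
        (D * (J (P-a) * J (Q-b))))
    refine (bound2 (-(n:ℤ))).trans (le_of_eq ?_)
    congr 1
    rw [← Real.rpow_natCast ((2:ℝ) ^ (-ε)) n, ← Real.rpow_mul (by norm_num : (0:ℝ) ≤ 2)]
    congr 1
    push_cast
    ring
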